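/- For every even integer N ≥ 2 there exists a binary tree T with N leaves and a placement of colored pebbles on its internal vertices, using 2^s colors where s = ⌊log₄(N/2)⌋, such that: (A) every root-to-leaf path contains exactly one pebble of each color; (B) for every vertex v, the number of pebbles on v is at least the total number of pebbles on its proper ancestors; and each color is used on at most ⌊N/3 + log₂(N)⌋ vertices. -/

import Mathlib

/-!
Write `N / 2 = ∑ βᵢ 4 ^ i` in base 4, so that `s = ⌊log₄ (N / 2)⌋` is the top digit
position. For every digit position `i` and each of the `βᵢ` copies, hang the `2 ^ i` complete
binary trees of depth `i + 1` ("gadgets" `(i, a)`, `a < 2 ^ i`) off a caterpillar spine; this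
gives `∑ βᵢ 2 ^ i 2 ^ (i + 1) = N` leaves. In gadget `(i, a)` colour `c` occupies the whole
level `size ((c / 2 ^ (s - i)) ^^^ a)`. A level meets every root-to-leaf path once, which is (A).
Within one gadget level `k` gets `2 ^ (s - i)` times as many colours as there are `x < 2 ^ i`
with `size x = k`, at least as many as all shallower levels together, and the spine carries
nothing, which is (B). For a fixed colour, `xor` permutes the `a`s, so the `2 ^ i` gadgets of one
copy hold `∑_{x < 2 ^ i} 2 ^ size x = (2 * 4 ^ i + 1) / 3` of its vertices; summing,
`3 |V c| = N + ∑ βᵢ ≤ N + 3 (s + 1)`.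
-/

open scoped BigOperators

/-- A (full) binary tree: every internal vertex has exactly two children. -/
inductive BTree : Type
  | leaf : BTree
  | node : BTree → BTree → BTree

namespace BTree

/-- Number of leaves. -/
def numLeaves : BTree → ℕ
  | leaf => 1
  | node l r => numLeaves l + numLeaves r

/-- The subtree reached from the root by following the path `p`
(`false` = left, `true` = right), if it exists. -/
def subtreeAt : BTree → List Bool → Option BTree
  | t, [] => some t
  | leaf, _ :: _ => none
  | node l r, b :: p => subtreeAt (if b then r else l) p

/-- `p` is (the position of) an internal vertex of `t`. -/
def IsInternalPos (t : BTree) (p : List Bool) : Prop :=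
  ∃ l r, subtreeAt t p = some (node l r)

/-- `p` is (the position of) a leaf of `t`. -/
def IsLeafPos (t : BTree) (p : List Bool) : Prop :=
  subtreeAt t p = some leaf

end BTree

/-- The number of pebbles on vertex `v` under the coloring `V`. -/
def pebbleCount {C : Type*} [Fintype C] (V : C → Finset (List Bool))
    (v : List Bool) : ℕ :=
  (Finset.univ.filter (fun c : C => v ∈ V c)).card

/-- The total number of pebbles on the proper ancestors of `v`. -/
def ancestorPebbles {C : Type*} [Fintype C] (V : C → Finset (List Bool))
    (v : List Bool) : ℕ :=
  ∑ q ∈ (List.inits v).toFinset.erase v, pebbleCount V q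

open Finset

namespace BTree

def complete : ℕ → BTree
  | 0 => leaf
  | n + 1 => node (complete n) (complete n)

theorem numLeaves_complete (n : ℕ) : (complete n).numLeaves = 2 ^ n := by
  induction n with
  | zero => rfl
  | succ n ih => rw [complete, numLeaves, ih, pow_succ, mul_two]

theorem subtreeAt_complete (n : ℕ) (p : List Bool) :
    (complete n).subtreeAt p = if p.length ≤ n then some (complete (n - p.length)) else none := by
  induction p generalizing n with
  | nil => simp [subtreeAt]
  | cons b p ih =>
    cases n with
    | zero => simp [complete, subtreeAt]
    | succ n => simp [complete, subtreeAt, ih]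

theorem complete_eq_leaf_iff {n : ℕ} : complete n = leaf ↔ n = 0 := by
  cases n <;> simp [complete]

theorem isLeafPos_complete_iff {n : ℕ} {p : List Bool} :
    (complete n).IsLeafPos p ↔ p.length = n := by
  rw [IsLeafPos, subtreeAt_complete]
  split_ifs with h
  · rw [Option.some.injEq, complete_eq_leaf_iff]
    omega
  · exact iff_of_false (by simp) (by omega)

theorem isInternalPos_complete_iff {n : ℕ} {p : List Bool} :
    (complete n).IsInternalPos p ↔ p.length < n := by
  rw [IsInternalPos, subtreeAt_complete]
  split_ifs with h
  · cases hm : n - p.length with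
    | zero => exact iff_of_false (by simp [complete]) (by omega)
    | succ m => exact iff_of_true ⟨_, _, rfl⟩ (by omega)
  · exact iff_of_false (by simp) (by omega)

end BTree

def wordsOfLength (n : ℕ) : Finset (List Bool) :=
  (univ : Finset (List.Vector Bool n)).map ⟨List.Vector.toList, List.Vector.toList_injective⟩

theorem mem_wordsOfLength {n : ℕ} {w : List Bool} : w ∈ wordsOfLength n ↔ w.length = n :=
  ⟨fun h => by obtain ⟨v, -, rfl⟩ := mem_map.1 h; exact v.toList_length,
    fun h => mem_map.2 ⟨⟨w, h⟩, mem_univ _, rfl⟩⟩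

theorem card_wordsOfLength (n : ℕ) : (wordsOfLength n).card = 2 ^ n := by
  rw [wordsOfLength, card_map, card_univ, card_vector, Fintype.card_bool]

section Pebbling

variable {C : Type*}

def graft (V W : C → Finset (List Bool)) (c : C) : Finset (List Bool) :=
  (V c).image (List.cons false) ∪ (W c).image (List.cons true)

theorem nil_not_mem_graft {V W : C → Finset (List Bool)} {c : C} : [] ∉ graft V W c := by
  simp [graft]

theorem cons_mem_graft {V W : C → Finset (List Bool)} {c : C} {b : Bool} {w : List Bool} :
    b :: w ∈ graft V W c ↔ w ∈ (if b then W else V) c := by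
  cases b <;> simp [graft]

theorem card_graft (V W : C → Finset (List Bool)) (c : C) :
    (graft V W c).card = (V c).card + (W c).card := by
  rw [graft, card_union_of_disjoint, card_image_of_injective _ List.cons_injective,
    card_image_of_injective _ List.cons_injective]
  simp [disjoint_left]

variable [Fintype C]

structure IsTightCovering (t : BTree) (V : C → Finset (List Bool)) : Prop where
  isInternalPos_of_mem : ∀ c, ∀ v ∈ V c, t.IsInternalPos v
  existsUnique_prefix : ∀ c, ∀ p, t.IsLeafPos p → ∃! q, q ∈ V c ∧ q <+: p
  ancestorPebbles_le : ∀ v, t.IsInternalPos v → ancestorPebbles V v ≤ pebbleCount V v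

theorem ancestorPebbles_eq_sum_take (V : C → Finset (List Bool)) (v : List Bool) :
    ancestorPebbles V v = ∑ l ∈ range v.length, pebbleCount V (v.take l) := by
  refine sum_nbij' List.length (v.take ·) (fun q hq => ?_) (fun l hl => ?_) (fun q hq => ?_)
    (fun l hl => ?_) (fun q hq => ?_)
  all_goals simp only [mem_erase, List.mem_toFinset, List.mem_inits, mem_range] at *
  · exact lt_of_le_of_ne hq.2.length_le fun h => hq.1 (hq.2.eq_of_length h)
  · refine ⟨fun h => ?_, List.take_prefix _ _⟩
    have := congrArg List.length h
    rw [List.length_take_of_le hl.le] at this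
    omega
  · exact (List.prefix_iff_eq_take.1 hq.2).symm
  · simp [hl.le]
  · rw [← List.prefix_iff_eq_take.1 hq.2]

theorem ancestorPebbles_cons (V : C → Finset (List Bool)) (b : Bool) (w : List Bool) :
    ancestorPebbles V (b :: w) =
      pebbleCount V [] + ∑ l ∈ range w.length, pebbleCount V (b :: w.take l) := by
  rw [ancestorPebbles_eq_sum_take, List.length_cons, sum_range_succ', add_comm]
  rfl

theorem pebbleCount_graft_nil (V W : C → Finset (List Bool)) :
    pebbleCount (graft V W) [] = 0 := by
  simp [pebbleCount, nil_not_mem_graft]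

theorem pebbleCount_graft_cons (V W : C → Finset (List Bool)) (b : Bool) (w : List Bool) :
    pebbleCount (graft V W) (b :: w) = pebbleCount (if b then W else V) w := by
  simp only [pebbleCount, cons_mem_graft]

theorem ancestorPebbles_graft_cons (V W : C → Finset (List Bool)) (b : Bool) (w : List Bool) :
    ancestorPebbles (graft V W) (b :: w) = ancestorPebbles (if b then W else V) w := by
  rw [ancestorPebbles_cons, pebbleCount_graft_nil, zero_add, ancestorPebbles_eq_sum_take]
  simp only [pebbleCount_graft_cons]

theorem IsTightCovering.node {l r : BTree} {V W : C → Finset (List Bool)}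
    (hl : IsTightCovering l V) (hr : IsTightCovering r W) :
    IsTightCovering (.node l r) (graft V W) := by
  have child : ∀ b : Bool, IsTightCovering (if b then r else l) (if b then W else V) := by
    intro b; cases b <;> assumption
  refine ⟨fun c v hv => ?_, fun c p hp => ?_, fun v hv => ?_⟩
  · cases v with
    | nil => exact absurd hv nil_not_mem_graft
    | cons b w => exact (child b).isInternalPos_of_mem c w (cons_mem_graft.1 hv)
  · cases p with
    | nil => simp [BTree.IsLeafPos, BTree.subtreeAt] at hp
    | cons b p =>
      obtain ⟨q, ⟨hq, hqp⟩, huniq⟩ := (child b).existsUnique_prefix c p hp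
      refine ⟨b :: q, ⟨cons_mem_graft.2 hq, List.cons_prefix_cons.2 ⟨rfl, hqp⟩⟩, ?_⟩
      rintro (_ | ⟨b', q'⟩) ⟨hmem, hpre⟩
      · exact absurd hmem nil_not_mem_graft
      · obtain ⟨rfl, hq'p⟩ := List.cons_prefix_cons.1 hpre
        rw [huniq q' ⟨cons_mem_graft.1 hmem, hq'p⟩]
  · cases v with
    | nil => simp [ancestorPebbles_eq_sum_take]
    | cons b w =>
      rw [ancestorPebbles_graft_cons, pebbleCount_graft_cons]
      exact (child b).ancestorPebbles_le w hv

end Pebbling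

section Complete

variable {C : Type*} [Fintype C]

theorem pebbleCount_wordsOfLength (k : C → ℕ) (v : List Bool) :
    pebbleCount (fun c => wordsOfLength (k c)) v = #{c | k c = v.length} := by
  simp only [pebbleCount, mem_wordsOfLength, eq_comm]

theorem ancestorPebbles_wordsOfLength (k : C → ℕ) (v : List Bool) :
    ancestorPebbles (fun c => wordsOfLength (k c)) v = #{c | k c < v.length} := by
  rw [ancestorPebbles_eq_sum_take, card_eq_sum_card_fiberwise (f := k) (t := range v.length)
    (fun c hc => by simpa using hc)]
  refine sum_congr rfl fun l hl => ?_
  rw [pebbleCount_wordsOfLength, filter_filter, List.length_take_of_le (mem_range.1 hl).le]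
  congr 1
  ext c
  simp only [mem_filter, mem_univ, true_and]
  exact ⟨fun h => ⟨h ▸ mem_range.1 hl, h⟩, And.right⟩

theorem isTightCovering_complete {n : ℕ} (k : C → ℕ) (hk : ∀ c, k c < n)
    (htight : ∀ m < n, #{c | k c < m} ≤ #{c | k c = m}) :
    IsTightCovering (BTree.complete n) (fun c => wordsOfLength (k c)) where
  isInternalPos_of_mem c v hv := by
    rw [BTree.isInternalPos_complete_iff, mem_wordsOfLength.1 hv]
    exact hk c
  existsUnique_prefix c p hp := by
    rw [BTree.isLeafPos_complete_iff] at hp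
    refine ⟨p.take (k c), ⟨mem_wordsOfLength.2 ?_, List.take_prefix _ _⟩, ?_⟩
    · simp [hp, (hk c).le]
    · rintro q ⟨hq, hqp⟩
      rw [List.prefix_iff_eq_take.1 hqp, mem_wordsOfLength.1 hq]
  ancestorPebbles_le v hv := by
    rw [ancestorPebbles_wordsOfLength, pebbleCount_wordsOfLength]
    exact htight _ (BTree.isInternalPos_complete_iff.1 hv)

end Complete

section Caterpillar

variable {C : Type*}

def caterpillar : List (BTree × (C → Finset (List Bool))) → BTree × (C → Finset (List Bool))
  | [] => (.leaf, fun _ => ∅)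
  | [x] => x
  | x :: y :: xs =>
    (.node x.1 (caterpillar (y :: xs)).1, graft x.2 (caterpillar (y :: xs)).2)

theorem numLeaves_caterpillar {xs : List (BTree × (C → Finset (List Bool)))} (hxs : xs ≠ []) :
    (caterpillar xs).1.numLeaves = (xs.map (·.1.numLeaves)).sum := by
  induction xs using caterpillar.induct with
  | case1 => exact absurd rfl hxs
  | case2 x => simp [caterpillar]
  | case3 x y xs ih => simp [caterpillar, BTree.numLeaves, ih]

theorem card_caterpillar (xs : List (BTree × (C → Finset (List Bool)))) (c : C) :
    ((caterpillar xs).2 c).card = (xs.map (·.2 c |>.card)).sum := by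
  induction xs using caterpillar.induct with
  | case1 => simp [caterpillar]
  | case2 x => simp [caterpillar]
  | case3 x y xs ih => simp [caterpillar, card_graft, ih]

theorem isTightCovering_caterpillar [Fintype C] {xs : List (BTree × (C → Finset (List Bool)))}
    (hxs : xs ≠ []) (h : ∀ x ∈ xs, IsTightCovering x.1 x.2) :
    IsTightCovering (caterpillar xs).1 (caterpillar xs).2 := by
  induction xs using caterpillar.induct with
  | case1 => exact absurd rfl hxs
  | case2 x => exact h x (by simp)
  | case3 x y xs ih =>
    exact (h x (by simp)).node (ih (by simp) fun z hz => h z (by simp [hz]))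

end Caterpillar

section Arithmetic

variable {M : Type*} [AddCommMonoid M]

theorem sum_range_two_pow_xor (f : ℕ → M) {i a : ℕ} (ha : a < 2 ^ i) :
    ∑ x ∈ range (2 ^ i), f (x ^^^ a) = ∑ x ∈ range (2 ^ i), f x := by
  have hmaps : ∀ x ∈ range (2 ^ i), x ^^^ a ∈ range (2 ^ i) := fun x hx =>
    mem_range.2 (Nat.xor_lt_two_pow (mem_range.1 hx) ha)
  exact sum_nbij' (· ^^^ a) (· ^^^ a) hmaps hmaps (fun x _ => Nat.xor_xor_cancel_right x a)
    (fun x _ => Nat.xor_xor_cancel_right x a) fun _ _ => rfl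

theorem sum_range_mul_div (f : ℕ → M) (m q : ℕ) :
    ∑ c ∈ range (m * q), f (c / q) = q • ∑ x ∈ range m, f x := by
  induction m with
  | zero => simp
  | succ m ih =>
    rcases q.eq_zero_or_pos with rfl | hq
    · simp
    have hblock : ∀ x ∈ range q, f ((m * q + x) / q) = f m := fun x hx => by
      rw [add_comm, Nat.add_mul_div_right _ _ hq, Nat.div_eq_of_lt (mem_range.1 hx), zero_add]
    rw [add_mul, one_mul, sum_range_add, ih, sum_congr rfl hblock, sum_const, card_range,
      sum_range_succ, smul_add]

theorem size_two_pow_add {i x : ℕ} (hx : x < 2 ^ i) : Nat.size (2 ^ i + x) = i + 1 := by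
  have hlt : i < Nat.size (2 ^ i + x) := Nat.lt_size.2 (by omega)
  have hle : Nat.size (2 ^ i + x) ≤ i + 1 := Nat.size_le.2 (by rw [pow_succ]; omega)
  omega

theorem two_pow_mul_two_pow_succ (i : ℕ) : 2 ^ i * 2 ^ (i + 1) = 2 * 4 ^ i := by
  rw [show (4 : ℕ) = 2 * 2 by rfl, mul_pow, pow_succ]
  ring

theorem three_mul_sum_two_pow_size (i : ℕ) :
    3 * ∑ x ∈ range (2 ^ i), 2 ^ Nat.size x = 2 * 4 ^ i + 1 := by
  induction i with
  | zero => simp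
  | succ i ih =>
    have hupper : ∑ x ∈ range (2 ^ i), 2 ^ Nat.size (2 ^ i + x) = 2 ^ i * 2 ^ (i + 1) := by
      rw [sum_congr rfl fun x hx => by rw [size_two_pow_add (mem_range.1 hx)], sum_const,
        card_range, smul_eq_mul]
    rw [pow_succ, mul_two, sum_range_add, mul_add, ih, hupper, two_pow_mul_two_pow_succ]
    ring

theorem card_size_lt_le_card_size_eq {i m : ℕ} (hm : m ≤ i) :
    #{x ∈ range (2 ^ i) | Nat.size x < m} ≤ #{x ∈ range (2 ^ i) | Nat.size x = m} := by
  cases m with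
  | zero => simp
  | succ m =>
    refine card_le_card_of_injOn (2 ^ m + ·) (fun x hx => ?_) fun x _ y _ h => by simpa using h
    simp only [coe_filter, mem_range, Set.mem_ofPred_eq] at hx ⊢
    have hx' : x < 2 ^ m := Nat.size_le.1 (by omega)
    refine ⟨?_, size_two_pow_add hx'⟩
    calc 2 ^ m + x < 2 ^ (m + 1) := by rw [pow_succ]; omega
      _ ≤ 2 ^ i := Nat.pow_le_pow_right two_pos hm

end Arithmetic

section Gadget

def gadgetLevel (s i a c : ℕ) : ℕ := Nat.size ((c / 2 ^ (s - i)) ^^^ a)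

theorem gadgetLevel_le {s i a c : ℕ} (hi : i ≤ s) (ha : a < 2 ^ i) (hc : c < 2 ^ s) :
    gadgetLevel s i a c ≤ i :=
  Nat.size_le.2 <| Nat.xor_lt_two_pow
    (Nat.div_lt_of_lt_mul (by rwa [mul_comm, pow_mul_pow_sub 2 hi])) ha

theorem card_filter_gadgetLevel (P : ℕ → Prop) [DecidablePred P] {s i a : ℕ} (hi : i ≤ s)
    (ha : a < 2 ^ i) :
    #{c : Fin (2 ^ s) | P (gadgetLevel s i a c)} =
      2 ^ (s - i) * #{x ∈ range (2 ^ i) | P (Nat.size x)} := by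
  simp only [card_filter]
  rw [Fin.sum_univ_eq_sum_range (fun c => if P (gadgetLevel s i a c) then 1 else 0),
    ← pow_mul_pow_sub 2 hi]
  exact (sum_range_mul_div (fun x => if P (Nat.size (x ^^^ a)) then 1 else 0) _ _).trans
    (by rw [sum_range_two_pow_xor (fun x => if P (Nat.size x) then 1 else 0) ha, smul_eq_mul])

theorem three_mul_sum_two_pow_gadgetLevel {s i c : ℕ} (hi : i ≤ s) (hc : c < 2 ^ s) :
    3 * ∑ a ∈ range (2 ^ i), 2 ^ gadgetLevel s i a c = 2 * 4 ^ i + 1 := by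
  have hq : c / 2 ^ (s - i) < 2 ^ i :=
    Nat.div_lt_of_lt_mul (by rwa [mul_comm, pow_mul_pow_sub 2 hi])
  simp only [gadgetLevel, Nat.xor_comm (c / _)]
  rw [sum_range_two_pow_xor (fun x => 2 ^ Nat.size x) hq, three_mul_sum_two_pow_size]

def gadget (s : ℕ) (d : ℕ × ℕ) : BTree × (Fin (2 ^ s) → Finset (List Bool)) :=
  (.complete (d.1 + 1), fun c => wordsOfLength (gadgetLevel s d.1 d.2 c))

theorem isTightCovering_gadget {s : ℕ} {d : ℕ × ℕ} (hi : d.1 ≤ s) (ha : d.2 < 2 ^ d.1) :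
    IsTightCovering (gadget s d).1 (gadget s d).2 :=
  isTightCovering_complete _ (fun c => Nat.lt_succ_of_le (gadgetLevel_le hi ha c.isLt))
    fun m hm => by
      rw [card_filter_gadgetLevel (· < m) hi ha, card_filter_gadgetLevel (· = m) hi ha]
      exact Nat.mul_le_mul_left _ (card_size_lt_le_card_size_eq (Nat.lt_succ_iff.1 hm))

end Gadget

section Gadgets

def gadgets : ℕ → List ℕ → List (ℕ × ℕ)
  | _, [] => []
  | i, β :: L =>
    (List.replicate β ((List.range (2 ^ i)).map (i, ·))).flatten ++ gadgets (i + 1) L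

theorem mem_gadgets : ∀ {i : ℕ} {L : List ℕ} {d : ℕ × ℕ}, d ∈ gadgets i L →
    d.1 < i + L.length ∧ d.2 < 2 ^ d.1
  | _, [], _, hd => by simp [gadgets] at hd
  | i, β :: L, d, hd => by
    simp only [gadgets, List.mem_append, List.mem_flatten, List.mem_replicate] at hd
    rcases hd with ⟨_, ⟨-, rfl⟩, hd⟩ | hd
    · obtain ⟨a, ha, rfl⟩ := List.mem_map.1 hd
      simpa using ha
    · have := mem_gadgets hd
      simp only [List.length_cons]
      omega

theorem sum_map_gadgets (f : ℕ × ℕ → ℕ) {u v w : ℕ} : ∀ (i : ℕ) (L : List ℕ),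
    (∀ j, i ≤ j → j < i + L.length →
      w * ∑ a ∈ range (2 ^ j), f (j, a) = u * 4 ^ j + v) →
    w * ((gadgets i L).map f).sum = u * 4 ^ i * Nat.ofDigits 4 L + v * L.sum
  | _, [], _ => by simp [gadgets]
  | i, β :: L, h => by
    have hblock : ((List.range (2 ^ i)).map (f ∘ (i, ·))).sum =
        ∑ a ∈ range (2 ^ i), f (i, a) := rfl
    have hrest := sum_map_gadgets f (i + 1) L fun j hj hj' =>
      h j (by omega) (by simp only [List.length_cons]; omega)
    simp only [gadgets, List.map_append, List.sum_append, List.map_flatten, List.sum_flatten,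
      List.map_replicate, List.sum_replicate, List.map_map]
    rw [hblock, smul_eq_mul, mul_add, hrest, mul_left_comm, h i le_rfl (by simp),
      Nat.ofDigits_cons, List.sum_cons, pow_succ]
    ring

end Gadgets

section FairCovering

def fairCovering (n : ℕ) : BTree × (Fin (2 ^ Nat.log 4 n) → Finset (List Bool)) :=
  caterpillar ((gadgets 0 (Nat.digits 4 n)).map (gadget (Nat.log 4 n)))

theorem length_digits_four_le (n : ℕ) : (Nat.digits 4 n).length ≤ Nat.log 4 n + 1 :=
  (Nat.digits_length_le_iff (by norm_num) n).2 (Nat.lt_pow_succ_log_self (by norm_num) n)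

theorem mem_gadgets_digits {n : ℕ} {d : ℕ × ℕ} (hd : d ∈ gadgets 0 (Nat.digits 4 n)) :
    d.1 ≤ Nat.log 4 n ∧ d.2 < 2 ^ d.1 := by
  have := mem_gadgets hd
  have := length_digits_four_le n
  omega

theorem sum_numLeaves_gadgets (s n : ℕ) :
    ((gadgets 0 (Nat.digits 4 n)).map fun d => (gadget s d).1.numLeaves).sum = 2 * n := by
  simpa [gadget, BTree.numLeaves_complete, Nat.ofDigits_digits] using
    sum_map_gadgets (fun d => 2 ^ (d.1 + 1)) (u := 2) (v := 0) (w := 1) 0 (Nat.digits 4 n)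
      fun j _ _ => by
        simpa only [one_mul, add_zero, sum_const, card_range, smul_eq_mul]
          using two_pow_mul_two_pow_succ j

theorem three_mul_sum_card_gadgets (n : ℕ) (c : Fin (2 ^ Nat.log 4 n)) :
    3 * ((gadgets 0 (Nat.digits 4 n)).map fun d => ((gadget (Nat.log 4 n) d).2 c).card).sum =
      2 * n + (Nat.digits 4 n).sum := by
  simpa [gadget, card_wordsOfLength, Nat.ofDigits_digits] using
    sum_map_gadgets (fun d => 2 ^ gadgetLevel (Nat.log 4 n) d.1 d.2 c) (u := 2) (v := 1) (w := 3)
      0 (Nat.digits 4 n) fun j _ hj =>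
        three_mul_sum_two_pow_gadgetLevel (by have := length_digits_four_le n; omega) c.isLt

theorem gadgets_digits_ne_nil {n : ℕ} (hn : n ≠ 0) : gadgets 0 (Nat.digits 4 n) ≠ [] := by
  intro h
  have := sum_numLeaves_gadgets 0 n
  rw [h, List.map_nil, List.sum_nil] at this
  omega

theorem numLeaves_fairCovering {n : ℕ} (hn : n ≠ 0) : (fairCovering n).1.numLeaves = 2 * n := by
  rw [fairCovering, numLeaves_caterpillar (by simpa using gadgets_digits_ne_nil hn),
    List.map_map]
  exact sum_numLeaves_gadgets (Nat.log 4 n) n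

theorem isTightCovering_fairCovering {n : ℕ} (hn : n ≠ 0) :
    IsTightCovering (fairCovering n).1 (fairCovering n).2 :=
  isTightCovering_caterpillar (by simpa using gadgets_digits_ne_nil hn) fun x hx => by
    obtain ⟨d, hd, rfl⟩ := List.mem_map.1 hx
    exact isTightCovering_gadget (mem_gadgets_digits hd).1 (mem_gadgets_digits hd).2

theorem three_mul_card_fairCovering (n : ℕ) (c : Fin (2 ^ Nat.log 4 n)) :
    3 * ((fairCovering n).2 c).card = 2 * n + (Nat.digits 4 n).sum := by
  rw [fairCovering, card_caterpillar, List.map_map]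
  exact three_mul_sum_card_gadgets n c

end FairCovering

theorem natFloor_logb_four_half {N : ℕ} (hN : Even N) :
    ⌊Real.logb 4 ((N : ℝ) / 2)⌋₊ = Nat.log 4 (N / 2) := by
  have hhalf : (N : ℝ) / 2 = ((N / 2 : ℕ) : ℝ) := by
    rw [Nat.cast_div_charZero (even_iff_two_dvd.1 hN), Nat.cast_ofNat]
  rw [hhalf, ← Real.natFloor_logb_natCast, Nat.cast_ofNat]

theorem sum_digits_four_le (n : ℕ) : (Nat.digits 4 n).sum ≤ 3 * (Nat.log 4 n + 1) :=
  calc (Nat.digits 4 n).sum ≤ (Nat.digits 4 n).length • 3 :=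
        List.sum_le_card_nsmul _ _ fun _ hx =>
          Nat.le_of_lt_succ (Nat.digits_lt_base (by norm_num) hx)
    _ ≤ 3 * (Nat.log 4 n + 1) := by
        rw [smul_eq_mul, mul_comm]
        exact Nat.mul_le_mul_left 3 (length_digits_four_le n)

theorem log_four_half_add_one_le_logb_two {N : ℕ} (hN : 2 ≤ N) :
    (Nat.log 4 (N / 2) + 1 : ℝ) ≤ Real.logb 2 N := by
  have hpow : 2 ^ (Nat.log 4 (N / 2) + 1) ≤ N :=
    calc 2 ^ (Nat.log 4 (N / 2) + 1) = 2 * 2 ^ Nat.log 4 (N / 2) := by ring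
      _ ≤ 2 * 4 ^ Nat.log 4 (N / 2) := Nat.mul_le_mul_left 2 (Nat.pow_le_pow_left (by norm_num) _)
      _ ≤ 2 * (N / 2) := Nat.mul_le_mul_left 2 (Nat.pow_log_le_self 4 (by omega))
      _ ≤ N := Nat.mul_div_le N 2
  calc (Nat.log 4 (N / 2) + 1 : ℝ) ≤ Nat.log 2 N := by
        exact_mod_cast Nat.le_log_of_pow_le (by norm_num) hpow
    _ ≤ Real.logb 2 N := by exact_mod_cast Real.natLog_le_logb N 2

theorem card_fairCovering_le {N : ℕ} (hN : 2 ≤ N) (c : Fin (2 ^ Nat.log 4 (N / 2))) :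
    ((fairCovering (N / 2)).2 c).card ≤ ⌊(N : ℝ) / 3 + Real.logb 2 N⌋₊ := by
  have hcard := three_mul_card_fairCovering (N / 2) c
  have hdigits := sum_digits_four_le (N / 2)
  have hnat : 3 * ((fairCovering (N / 2)).2 c).card ≤ N + 3 * (Nat.log 4 (N / 2) + 1) := by
    omega
  have hreal : (3 * ((fairCovering (N / 2)).2 c).card : ℝ) ≤
      N + 3 * (Nat.log 4 (N / 2) + 1) := by
    exact_mod_cast hnat
  have hlog := log_four_half_add_one_le_logb_two hN
  exact Nat.le_floor (by linarith)

theorem exists_fair_tight_covering (N : ℕ) (hN : 2 ≤ N) (hNe : Even N) :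
    ∃ (t : BTree)
      (V : Fin (2 ^ Nat.floor (Real.logb 4 ((N : ℝ) / 2))) → Finset (List Bool)),
      t.numLeaves = N ∧
      (∀ c, ∀ v ∈ V c, t.IsInternalPos v) ∧
      (∀ c, ∀ p : List Bool, t.IsLeafPos p →
        ∃! q : List Bool, q ∈ V c ∧ q <+: p) ∧
      (∀ v : List Bool, t.IsInternalPos v →
        ancestorPebbles V v ≤ pebbleCount V v) ∧
      (∀ c, (V c).card ≤ Nat.floor ((N : ℝ) / 3 + Real.logb 2 N)) := by
  rw [natFloor_logb_four_half hNe]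
  have hn : N / 2 ≠ 0 := by omega
  obtain ⟨hint, huniq, htight⟩ := isTightCovering_fairCovering hn
  exact ⟨_, _, (numLeaves_fairCovering hn).trans (Nat.two_mul_div_two_of_even hNe), hint, huniq,
    htight, card_fairCovering_le hN⟩
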